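/- Let M be a positive integer, let x ≠ 0 be real, and for 1 ≤ m ≤ M set γ_{m,M} = (m−1/2)/M. Define real sequences α_n(x,t), β_n(x,t) by α_1(x,t) = 1/(xt), β_1(x,t) = 1, and for n ≥ 2: α_n(x,t) = α_{n−1}(x,t)(1 − 1/(xt)²) + 2β_{n−1}(x,t)/(xt) and β_n(x,t) = β_{n−1}(x,t)(1 − 1/(xt)²) − 2α_{n−1}(x,t)/(xt). Then the series 2 ∑_{m=1}^M ∑_{n=1}^∞ 1/( (2n−1)(2m−1)^(2n−1) ) · α_n(x,γ_{m,M}) / ( α_n(x,γ_{m,M})² + β_n(x,γ_{m,M})² ) converges (the sum over m being finite and the sum over n convergent for each m) and its value equals arctan(x). -/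

import Mathlib

/-- The pair `(α_{n+1}(x,t), β_{n+1}(x,t))` of the two-step iteration with
`α_1(x,t) = 1/(xt)`, `β_1(x,t) = 1`,
`α_n(x,t) = α_{n-1}(x,t)(1 - 1/(xt)²) + 2 β_{n-1}(x,t)/(xt)` and
`β_n(x,t) = β_{n-1}(x,t)(1 - 1/(xt)²) - 2 α_{n-1}(x,t)/(xt)`. -/
noncomputable def ab (x t : ℝ) : ℕ → ℝ × ℝ
  | 0 => (1 / (x * t), 1)
  | n + 1 =>
      ((ab x t n).1 * (1 - 1 / (x * t) ^ 2) + 2 * (ab x t n).2 / (x * t),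
       (ab x t n).2 * (1 - 1 / (x * t) ^ 2) - 2 * (ab x t n).1 / (x * t))


/-!
With `c = 1 / (x t)`, the pair `ab x t n = (α, β)` satisfies `β + α i = (1 + c i) ^ (2n+1)`, so the
`n`-th term for a given `m` is `Im (w ^ (2n+1) / (2n+1))` with `w = ((2m-1)(1 - c i))⁻¹ = a / (b - i)`,
where `a = x / (2M)` and `b = x t = (2m-1) a`. Summing over `n` gives
`Im (artanh w) = arg ((1 + w) / (1 - w)) / 2 = (arctan (b + a) - arctan (b - a)) / 2`, that is
`(arctan (m x / M) - arctan ((m - 1) x / M)) / 2`, and the sum over `m` telescopes to `arctan x / 2`.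
-/

open Complex

lemma ab_snd_add_fst_mul_I (x t : ℝ) (n : ℕ) :
    ((ab x t n).2 : ℂ) + (ab x t n).1 * I = (1 + ((1 / (x * t) : ℝ) : ℂ) * I) ^ (2 * n + 1) := by
  induction n with
  | zero => simp [ab]
  | succ n ih =>
    rw [show 2 * (n + 1) + 1 = (2 * n + 1) + 2 by ring, pow_add, ← ih]
    simp only [ab]
    push_cast
    linear_combination (-(2 * ((ab x t n).1 : ℂ) * ((x : ℂ) * t)⁻¹ +
      (((ab x t n).2 : ℂ) + (ab x t n).1 * I) * ((x : ℂ) * t)⁻¹ ^ 2)) * I_sq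

lemma Finset.sum_Icc_one_sub_pred {G : Type*} [AddCommGroup G] (f : ℕ → G) (M : ℕ) :
    ∑ m ∈ Finset.Icc 1 M, (f m - f (m - 1)) = f M - f 0 := by
  rw [← Finset.Ico_add_one_right_eq_Icc, Finset.sum_Ico_eq_sum_range, Nat.add_sub_cancel,
    ← Finset.sum_range_sub]
  refine Finset.sum_congr rfl fun k _ => ?_
  rw [Nat.add_sub_cancel_left, add_comm]

lemma Complex.arg_eq_arctan_of_re_pos {z : ℂ} (hz : 0 < z.re) :
    z.arg = Real.arctan (z.im / z.re) := by
  have habs := abs_lt.mp (abs_arg_lt_pi_div_two_iff.mpr (Or.inl hz))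
  rw [← tan_arg, Real.arctan_tan habs.1 habs.2]

lemma Complex.arg_sub_I_div_sub_I {p q : ℝ} (h : 0 < 1 + p * q) :
    ((p - I) / (q - I)).arg = Real.arctan p - Real.arctan q := by
  have hq : 0 < q ^ 2 + 1 := by positivity
  have hre : ((p - I) / (q - I)).re = (1 + p * q) / (q ^ 2 + 1) := by
    simp only [div_re, sub_re, ofReal_re, I_re, sub_zero, normSq_apply, sub_im, ofReal_im, I_im,
      zero_sub, mul_neg, mul_one, neg_neg, one_div]
    ring
  have him : ((p - I) / (q - I)).im = (p - q) / (q ^ 2 + 1) := by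
    simp only [div_im, sub_im, ofReal_im, I_im, zero_sub, sub_re, ofReal_re, I_re, sub_zero,
      neg_mul, one_mul, normSq_apply, mul_neg, mul_one, neg_neg]
    ring
  rw [arg_eq_arctan_of_re_pos (hre ▸ div_pos h hq), hre, him, div_div_div_cancel_right₀ hq.ne',
    sub_eq_add_neg (Real.arctan p), ← Real.arctan_neg, Real.arctan_add (by linarith)]
  ring_nf

lemma Complex.hasSum_odd_pow_div {w : ℂ} (hw : ‖w‖ < 1) :
    HasSum (fun n : ℕ => w ^ (2 * n + 1) / ↑(2 * n + 1)) (log ((1 + w) / (1 - w)) / 2) := by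
  have h := (hasSum_arctan (z := -I * w) (by simpa)).mul_left I
  have hval : I * arctan (-I * w) = log ((1 + w) / (1 - w)) / 2 := by
    have hw' : -I * w * I = w := by linear_combination (-w) * I_sq
    rw [arctan, hw']
    linear_combination (-log ((1 + w) / (1 - w)) / 2) * I_sq
  rw [hval] at h
  refine h.congr_fun fun n => ?_
  have hI : (-1) ^ n * (-I) ^ (2 * n + 1) = -I := by
    rw [pow_succ, pow_mul, neg_sq, I_sq, ← mul_assoc, ← mul_pow, neg_one_mul, neg_neg, one_pow,
      one_mul]
  rw [mul_pow, ← mul_assoc, hI, ← mul_div_assoc, ← mul_assoc, mul_neg, I_mul_I, neg_neg, one_mul]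

lemma hasSum_im_odd_pow_div_sub_I {a b : ℝ} (h : a ^ 2 < b ^ 2 + 1) :
    HasSum (fun n : ℕ => ((a / (b - I)) ^ (2 * n + 1) / ↑(2 * n + 1)).im)
      ((Real.arctan (b + a) - Real.arctan (b - a)) / 2) := by
  have hb : (b : ℂ) - I ≠ 0 := fun h0 => by simpa using congrArg im h0
  have hw : ‖(a : ℂ) / (b - I)‖ < 1 := by
    rw [← sq_lt_one_iff₀ (norm_nonneg _), Complex.sq_norm, normSq_div, div_lt_one]
    · simpa [normSq_apply, sq] using h
    · exact normSq_pos.2 hb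
  have hquot : (1 + a / (b - I)) / (1 - a / (b - I)) = ((b + a : ℝ) - I) / ((b - a : ℝ) - I) := by
    have hba : ((b - a : ℝ) : ℂ) - I ≠ 0 := fun h0 => by simpa using congrArg im h0
    push_cast at hba ⊢
    rw [one_add_div hb, one_sub_div hb, div_div_div_cancel_right₀ hb]
    ring_nf
  convert hasSum_im (hasSum_odd_pow_div hw) using 1
  rw [div_ofNat_im, log_im, hquot, arg_sub_I_div_sub_I (by nlinarith)]

lemma ab_term_eq_im (x t k : ℝ) (n : ℕ) :
    1 / ((2 * (n : ℝ) + 1) * k ^ (2 * n + 1)) *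
        ((ab x t n).1 / ((ab x t n).1 ^ 2 + (ab x t n).2 ^ 2)) =
      (((k * (1 - ((1 / (x * t) : ℝ) : ℂ) * I))⁻¹) ^ (2 * n + 1) / ↑(2 * n + 1)).im := by
  have hconj : (1 - ((1 / (x * t) : ℝ) : ℂ) * I) ^ (2 * n + 1) =
      (starRingEnd ℂ) (((ab x t n).2 : ℂ) + (ab x t n).1 * I) := by
    rw [ab_snd_add_fst_mul_I, map_pow, map_add, map_one, map_mul, conj_ofReal, conj_I, mul_neg,
      sub_eq_add_neg]
  have hsplit : ((k * (1 - ((1 / (x * t) : ℝ) : ℂ) * I))⁻¹) ^ (2 * n + 1) / ↑(2 * n + 1) =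
      ((1 / ((2 * (n : ℝ) + 1) * k ^ (2 * n + 1)) : ℝ) : ℂ) *
        ((starRingEnd ℂ) (((ab x t n).2 : ℂ) + (ab x t n).1 * I))⁻¹ := by
    rw [inv_pow, mul_pow, hconj, mul_inv, one_div, mul_inv]
    push_cast
    ring
  rw [hsplit, im_ofReal_mul, inv_im, normSq_conj, conj_im, normSq_add_mul_I, neg_neg,
    add_comm ((ab x t n).2 ^ 2)]
  simp

lemma hasSum_ab_term {x t k : ℝ} (hxt : x * t ≠ 0) (hk : 1 ≤ k ^ 2) :
    HasSum (fun n : ℕ => 1 / ((2 * (n : ℝ) + 1) * k ^ (2 * n + 1)) *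
        ((ab x t n).1 / ((ab x t n).1 ^ 2 + (ab x t n).2 ^ 2)))
      ((Real.arctan (x * t + x * t / k) - Real.arctan (x * t - x * t / k)) / 2) := by
  have hk0 : k ≠ 0 := by rintro rfl; norm_num at hk
  have hden : ((x * t : ℝ) : ℂ) - I ≠ 0 := fun h0 => by simpa using congrArg im h0
  have hw : ((k : ℂ) * (1 - ((1 / (x * t) : ℝ) : ℂ) * I))⁻¹ =
      ((x * t / k : ℝ) : ℂ) / ((x * t : ℝ) - I) := by
    obtain ⟨hx, ht⟩ := mul_ne_zero_iff.1 hxt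
    have hsplit : (k : ℂ) * (1 - ((1 / (x * t) : ℝ) : ℂ) * I) =
        k / ((x * t : ℝ) : ℂ) * (((x * t : ℝ) : ℂ) - I) := by
      have hx' : (x : ℂ) ≠ 0 := ofReal_ne_zero.2 hx
      have ht' : (t : ℂ) ≠ 0 := ofReal_ne_zero.2 ht
      push_cast
      field_simp
    rw [hsplit, mul_inv, inv_div]
    push_cast
    ring
  simp_rw [ab_term_eq_im, hw]
  refine hasSum_im_odd_pow_div_sub_I ?_
  calc (x * t / k) ^ 2 = (x * t) ^ 2 / k ^ 2 := div_pow _ _ _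
    _ ≤ (x * t) ^ 2 := div_le_self (sq_nonneg _) hk
    _ < (x * t) ^ 2 + 1 := lt_add_one _

lemma hasSum_ab_midpoint_term {M m : ℕ} (hM : 0 < M) (hm : 1 ≤ m) {x : ℝ} (hx : x ≠ 0) :
    HasSum (fun n : ℕ =>
      1 / ((2 * (n : ℝ) + 1) * (2 * (m : ℝ) - 1) ^ (2 * n + 1)) *
        ((ab x (((m : ℝ) - 1 / 2) / (M : ℝ)) n).1 /
          ((ab x (((m : ℝ) - 1 / 2) / (M : ℝ)) n).1 ^ 2 +
           (ab x (((m : ℝ) - 1 / 2) / (M : ℝ)) n).2 ^ 2)))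
      ((Real.arctan (m * x / M) - Real.arctan (((m - 1 : ℕ) : ℝ) * x / M)) / 2) := by
  have hM' : (0 : ℝ) < M := Nat.cast_pos.2 hM
  have hm' : (1 : ℝ) ≤ m := Nat.one_le_cast.2 hm
  have hk : 2 * (m : ℝ) - 1 ≠ 0 := by linarith
  have hxt : x * (((m : ℝ) - 1 / 2) / M) ≠ 0 :=
    mul_ne_zero hx (div_ne_zero (by linarith) hM'.ne')
  have hratio : x * (((m : ℝ) - 1 / 2) / M) / (2 * m - 1) = x / (2 * M) := by
    rw [div_eq_iff hk]; field_simp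
  have hupper : x * (((m : ℝ) - 1 / 2) / M) + x * (((m : ℝ) - 1 / 2) / M) / (2 * m - 1) =
      m * x / M := by
    rw [hratio]; field_simp; ring
  have hlower : x * (((m : ℝ) - 1 / 2) / M) - x * (((m : ℝ) - 1 / 2) / M) / (2 * m - 1) =
      ((m - 1 : ℕ) : ℝ) * x / M := by
    rw [hratio, Nat.cast_sub hm, Nat.cast_one]; field_simp; ring
  convert hasSum_ab_term hxt (k := 2 * m - 1) (by nlinarith) using 1
  rw [hupper, hlower]

theorem arctan_generalized_series (M : ℕ) (hM : 0 < M) (x : ℝ) (hx : x ≠ 0) :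
    (∀ m ∈ Finset.Icc 1 M, Summable (fun n : ℕ =>
      1 / ((2 * (n : ℝ) + 1) * (2 * (m : ℝ) - 1) ^ (2 * n + 1)) *
        ((ab x (((m : ℝ) - 1 / 2) / (M : ℝ)) n).1 /
          ((ab x (((m : ℝ) - 1 / 2) / (M : ℝ)) n).1 ^ 2 +
           (ab x (((m : ℝ) - 1 / 2) / (M : ℝ)) n).2 ^ 2)))) ∧
    2 * ∑ m ∈ Finset.Icc 1 M, ∑' n : ℕ,
      1 / ((2 * (n : ℝ) + 1) * (2 * (m : ℝ) - 1) ^ (2 * n + 1)) *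
        ((ab x (((m : ℝ) - 1 / 2) / (M : ℝ)) n).1 /
          ((ab x (((m : ℝ) - 1 / 2) / (M : ℝ)) n).1 ^ 2 +
           (ab x (((m : ℝ) - 1 / 2) / (M : ℝ)) n).2 ^ 2))
      = Real.arctan x := by
  have hterm := fun m (hm : m ∈ Finset.Icc 1 M) =>
    hasSum_ab_midpoint_term hM (Finset.mem_Icc.1 hm).1 hx
  refine ⟨fun m hm => (hterm m hm).summable, ?_⟩
  rw [Finset.sum_congr rfl fun m hm => (hterm m hm).tsum_eq, ← Finset.sum_div,
    Finset.sum_Icc_one_sub_pred (fun j : ℕ => Real.arctan (j * x / M))]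
  simp only [mul_div_cancel_left₀ x (Nat.cast_pos.2 hM).ne', Nat.cast_zero, zero_mul, zero_div,
    Real.arctan_zero, sub_zero]
  ring
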